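/- arXiv:1901.07898 — 2 statements merged into one kernel-verified Lean document; each statement's English description precedes it below -/
import Mathlib

section
/- Let $m \ge 2$ be an integer and let $s > 0$ be real. Then $\prod_{k=0}^{m-1} \Gamma\!\left(\tfrac{s+1+k}{m}\right)^{\frac{2k+1-m}{m}} \Big/ \prod_{k=0}^{m-1} \Gamma\!\left(\tfrac{s+k}{m}\right)^{\frac{2k+1-m}{m}} = \dfrac{\Gamma\!\left(\tfrac{s}{m}\right)^{\frac{m+1}{m}} \Gamma\!\left(\tfrac{s}{m}+1\right)^{\frac{m-1}{m}}}{(2\pi)^{\frac{m-1}{m}}\, m^{\frac{1-2s}{m}}\, \Gamma(s)^{\frac{2}{m}}}$, where all powers are real powers of positive real numbers and $\Gamma$ is the real Gamma function. -/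
/-!
Gauss's multiplication formula `∏_{k<m} Γ((s+k)/m) = (2π)^((m-1)/2) m^(1/2-s) Γ(s)` follows from
Bohr–Mollerup: `m^(s-1) ∏_{k<m} Γ((s+k)/m)`, normalised to be `1` at `s = 1`, is log-convex and
satisfies the functional equation of `Γ`. The normalising constant `∏_{k<m} Γ((1+k)/m)` is found by
pairing factors with Euler's reflection formula, which reduces it to the sine product
`∏_{0<k<m} sin(πk/m) = m / 2^(m-1)`, i.e. to `∏_{0<k<m} (1 - ζ^k) = m` for a primitive `m`-th root
of unity `ζ`.

With `L k = log Γ((s+k)/m)`, the logarithm of the quotient is `∑_{k<m} c_k (L (k+1) - L k)`, where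
the exponents `c_k` form an arithmetic progression of step `2/m`. Summation by parts leaves the two
boundary terms and `2/m ∑_{k<m} L (k+1)`, which is the logarithm of the multiplication formula at
`s + 1`.
-/

open Real Finset

theorem ConvexOn.finset_sum {𝕜 E β ι : Type*} [Semiring 𝕜] [PartialOrder 𝕜] [AddCommMonoid E]
    [AddCommMonoid β] [PartialOrder β] [IsOrderedAddMonoid β] [SMul 𝕜 E] [Module 𝕜 β]
    {s : Set E} (hs : Convex 𝕜 s) {t : Finset ι} {f : ι → E → β}
    (hf : ∀ i ∈ t, ConvexOn 𝕜 s (f i)) : ConvexOn 𝕜 s fun x ↦ ∑ i ∈ t, f i x := by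
  classical
  induction t using Finset.induction_on with
  | empty => simpa using convexOn_const 0 hs
  | insert i t hi ih =>
    simp only [Finset.sum_insert hi]
    exact (hf i (mem_insert_self i t)).add (ih fun j hj ↦ hf j (mem_insert_of_mem hj))

open Polynomial in
theorem IsPrimitiveRoot.prod_one_sub_pow_succ {R : Type*} [CommRing R] [IsDomain R] {ζ : R}
    {n : ℕ} (hζ : IsPrimitiveRoot ζ n) (hn : n ≠ 0) :
    ∏ k ∈ range (n - 1), (1 - ζ ^ (k + 1)) = n := by
  have hroots : (X - 1) * ∏ k ∈ range (n - 1), (X - C (ζ ^ (k + 1))) = X ^ n - 1 := by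
    rw [← C_1, X_pow_sub_C_eq_prod hζ (Nat.pos_of_ne_zero hn) (one_pow n),
      ← Nat.sub_one_add_one hn, prod_range_succ']
    simp [mul_comm]
  have hgeom : ∏ k ∈ range (n - 1), (X - C (ζ ^ (k + 1))) = ∑ i ∈ range n, (X : R[X]) ^ i := by
    refine mul_left_cancel₀ (X_sub_C_ne_zero 1) ?_
    rw [C_1, hroots, mul_geom_sum]
  simpa [eval_prod] using congrArg (eval 1) hgeom

theorem Real.prod_sin_pi_mul_succ_div {n : ℕ} (hn : n ≠ 0) :
    ∏ k ∈ range (n - 1), sin (π * (k + 1) / n) = n / 2 ^ (n - 1) := by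
  have hnorm : ∀ k ∈ range (n - 1),
      ‖1 - Complex.exp (2 * π * Complex.I / n) ^ (k + 1)‖ = 2 * sin (π * (k + 1) / n) := by
    intro k hk
    have hkn : (k : ℝ) + 1 ≤ n := by exact_mod_cast Nat.lt_of_lt_pred (mem_range.mp hk)
    have harg : ((k + 1 : ℕ) : ℂ) * (2 * π * Complex.I / n) =
        Complex.I * ((2 * π * (k + 1) / n : ℝ) : ℂ) := by
      push_cast
      ring
    rw [← Complex.exp_nat_mul, norm_sub_rev, harg, Complex.norm_exp_I_mul_ofReal_sub_one,
      norm_of_nonneg]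
    · ring_nf
    · refine mul_nonneg two_pos.le (sin_nonneg_of_nonneg_of_le_pi (by positivity) ?_)
      rw [div_le_iff₀ two_pos, div_le_iff₀ (by positivity)]
      nlinarith [pi_pos]
  have h := congrArg (‖·‖) ((Complex.isPrimitiveRoot_exp n hn).prod_one_sub_pow_succ hn)
  rw [norm_prod, prod_congr rfl hnorm, prod_mul_distrib, prod_const, card_range,
    Complex.norm_natCast] at h
  rw [eq_div_iff (by positivity), mul_comm]
  exact h

theorem Real.prod_Gamma_one_add_div_sq {n : ℕ} (hn : n ≠ 0) :
    (∏ k ∈ range n, Gamma ((1 + k) / n)) ^ 2 = (2 * π) ^ (n - 1) / n := by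
  have hn' : (n : ℝ) ≠ 0 := by exact_mod_cast hn
  have hlast : ∏ k ∈ range n, Gamma ((1 + k) / n) = ∏ k ∈ range (n - 1), Gamma ((1 + k) / n) := by
    have h := prod_range_succ (fun k : ℕ ↦ Gamma ((1 + k) / n)) (n - 1)
    rw [Nat.sub_one_add_one hn, Nat.cast_pred (Nat.pos_of_ne_zero hn)] at h
    simp [h, hn']
  have hreflect : ∏ k ∈ range (n - 1), Gamma ((1 + k) / n) =
      ∏ k ∈ range (n - 1), Gamma (1 - (1 + k) / n) := by
    rw [← prod_range_reflect]
    refine prod_congr rfl fun k hk ↦ ?_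
    have : k < n - 1 := mem_range.mp hk
    congr 1
    rw [Nat.cast_sub (by omega), Nat.cast_sub (by omega), Nat.cast_sub (by omega)]
    field_simp
    ring
  rw [hlast, sq]
  nth_rw 2 [hreflect]
  rw [← prod_mul_distrib]
  simp_rw [Gamma_mul_Gamma_one_sub]
  rw [prod_div_distrib, prod_const, card_range]
  simp_rw [mul_div_assoc', add_comm (1 : ℝ)]
  rw [prod_sin_pi_mul_succ_div hn, mul_pow]
  field_simp

theorem Real.prod_Gamma_one_add_div {n : ℕ} (hn : n ≠ 0) :
    ∏ k ∈ range n, Gamma ((1 + k) / n) =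
      (2 * π) ^ (((n : ℝ) - 1) / 2) * (n : ℝ) ^ (-(1 / 2) : ℝ) := by
  have hn' : (0 : ℝ) < n := by positivity
  have hsq : ((2 * π) ^ (((n : ℝ) - 1) / 2) * (n : ℝ) ^ (-(1 / 2) : ℝ)) ^ 2 =
      (2 * π) ^ (n - 1) / n := by
    rw [mul_pow, ← rpow_mul_natCast (by positivity), ← rpow_mul_natCast hn'.le,
      show ((n : ℝ) - 1) / 2 * (2 : ℕ) = (n - 1 : ℕ) by
        rw [Nat.cast_pred (Nat.pos_of_ne_zero hn)]; ring,
      show -(1 / 2 : ℝ) * (2 : ℕ) = -1 by norm_num, rpow_natCast, rpow_neg_one, div_eq_mul_inv]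
  rw [← pow_left_inj₀ (prod_pos fun k _ ↦ Gamma_pos_of_pos (by positivity)).le (by positivity)
    two_ne_zero, prod_Gamma_one_add_div_sq hn, hsq]

theorem Real.convexOn_log_Gamma_add_div {a b : ℝ} (ha : 0 ≤ a) (hb : 0 < b) :
    ConvexOn ℝ (Set.Ioi 0) fun s ↦ log (Gamma ((s + a) / b)) := by
  refine ⟨convex_Ioi 0, fun x hx y hy p q hp hq hpq ↦ ?_⟩
  have hx' : (x + a) / b ∈ Set.Ioi 0 := div_pos (by linarith [Set.mem_Ioi.mp hx]) hb
  have hy' : (y + a) / b ∈ Set.Ioi 0 := div_pos (by linarith [Set.mem_Ioi.mp hy]) hb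
  have h := convexOn_log_Gamma.2 hx' hy' hp hq hpq
  have harg : p • ((x + a) / b) + q • ((y + a) / b) = (p • x + q • y + a) / b := by
    simp only [smul_eq_mul]
    field_simp
    linear_combination a * hpq
  rwa [harg] at h

theorem Real.prod_Gamma_add_one_add_div {n : ℕ} (hn : n ≠ 0) {s : ℝ} (hs : 0 < s) :
    ∏ k ∈ range n, Gamma ((s + 1 + k) / n) = s / n * ∏ k ∈ range n, Gamma ((s + k) / n) := by
  have hn' : (0 : ℝ) < n := by positivity
  have h := (prod_range_succ' (fun k : ℕ ↦ Gamma ((s + k) / n)) n).symm.trans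
    (prod_range_succ (fun k : ℕ ↦ Gamma ((s + k) / n)) n)
  have hlast : Gamma ((s + n) / n) = s / n * Gamma (s / n) := by
    rw [add_div, div_self hn'.ne', Gamma_add_one (by positivity)]
  simp only [hlast, Nat.cast_zero, add_zero, Nat.cast_succ, ← add_assoc] at h
  refine mul_right_cancel₀ (Gamma_pos_of_pos (by positivity : 0 < s / n)).ne' ?_
  simp_rw [add_right_comm s 1, h]
  ring

theorem Real.prod_Gamma_add_div_eq_mul_prod_Gamma_one_add_div {n : ℕ} (hn : n ≠ 0) {s : ℝ}
    (hs : 0 < s) :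
    ∏ k ∈ range n, Gamma ((s + k) / n) =
      (n : ℝ) ^ (1 - s) * (∏ k ∈ range n, Gamma ((1 + k) / n)) * Gamma s := by
  have hn' : (0 : ℝ) < n := by positivity
  have hprod : ∀ {y : ℝ}, 0 < y → 0 < ∏ k ∈ range n, Gamma ((y + k) / n) := fun hy ↦
    prod_pos fun k _ ↦ Gamma_pos_of_pos (by positivity)
  set C := ∏ k ∈ range n, Gamma ((1 + k) / n)
  have hC : 0 < C := hprod one_pos
  let f : ℝ → ℝ := fun y ↦ (n : ℝ) ^ y * (∏ k ∈ range n, Gamma ((y + k) / n)) / (n * C)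
  have hconv : ConvexOn ℝ (Set.Ioi 0) (log ∘ f) := by
    refine ((((convexOn_id (convex_Ioi 0)).smul (log_natCast_nonneg n)).add
      (ConvexOn.finset_sum (t := range n) (convex_Ioi 0) fun k _ ↦
        convexOn_log_Gamma_add_div k.cast_nonneg hn')).add_const (-log (n * C))).congr
      fun y (hy : 0 < y) ↦ ?_
    rw [Function.comp_apply, log_div (by positivity [hprod hy]) (by positivity),
      log_mul (by positivity) (hprod hy).ne', log_rpow hn',
      log_prod fun k _ ↦ (Gamma_pos_of_pos (by positivity)).ne']
    simp only [Pi.add_apply, id, smul_eq_mul]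
    ring
  have hfeq : ∀ {y : ℝ}, 0 < y → f (y + 1) = y * f y := by
    intro y hy
    simp only [f, prod_Gamma_add_one_add_div hn hy, rpow_add_one hn'.ne']
    field_simp
  have hfpos : ∀ {y : ℝ}, 0 < y → 0 < f y := fun hy ↦ by positivity [hprod hy]
  have hfone : f 1 = 1 := by simp [f, C, hC.ne', hn]
  have h := eq_Gamma_of_log_convex hconv hfeq hfpos hfone hs
  simp only [f] at h
  rw [← h, rpow_sub hn', rpow_one]
  field_simp

theorem Real.prod_Gamma_add_div {n : ℕ} (hn : n ≠ 0) {s : ℝ} (hs : 0 < s) :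
    ∏ k ∈ range n, Gamma ((s + k) / n) =
      (2 * π) ^ (((n : ℝ) - 1) / 2) * (n : ℝ) ^ (1 / 2 - s) * Gamma s := by
  have hn' : (0 : ℝ) < n := by positivity
  rw [prod_Gamma_add_div_eq_mul_prod_Gamma_one_add_div hn hs, prod_Gamma_one_add_div hn,
    show 1 / 2 - s = 1 - s + -(1 / 2) by ring, rpow_add hn']
  ring

theorem Finset.sum_range_mul_sub_of_arithmetic {R : Type*} [CommRing R] {c : ℕ → R} {d : R}
    (hc : ∀ k, c (k + 1) = c k + d) (L : ℕ → R) (n : ℕ) :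
    ∑ k ∈ range n, c k * (L (k + 1) - L k) =
      c n * L n - c 0 * L 0 - d * ∑ k ∈ range n, L (k + 1) := by
  induction n with
  | zero => simp
  | succ n ih =>
    rw [sum_range_succ, sum_range_succ, ih, hc]
    ring

/-- For an integer `m ≥ 2` and real `s > 0`,
`∏_{k=0}^{m-1} Γ((s+1+k)/m)^{(2k+1-m)/m} / ∏_{k=0}^{m-1} Γ((s+k)/m)^{(2k+1-m)/m}
 = Γ(s/m)^{(m+1)/m} Γ(s/m + 1)^{(m-1)/m} / ((2π)^{(m-1)/m} m^{(1-2s)/m} Γ(s)^{2/m})`,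
with real powers of positive reals and `Γ` the real Gamma function. -/
theorem Zell_single_factor_quotient (m : ℕ) (hm : 2 ≤ m) (s : ℝ) (hs : 0 < s) :
    (∏ k ∈ Finset.range m,
        Real.Gamma ((s + 1 + k) / m) ^ ((2 * (k : ℝ) + 1 - m) / m)) /
      (∏ k ∈ Finset.range m,
        Real.Gamma ((s + k) / m) ^ ((2 * (k : ℝ) + 1 - m) / m)) =
    Real.Gamma (s / m) ^ (((m : ℝ) + 1) / m) *
        Real.Gamma (s / m + 1) ^ (((m : ℝ) - 1) / m) /
      ((2 * Real.pi) ^ (((m : ℝ) - 1) / m) * (m : ℝ) ^ ((1 - 2 * s) / m) *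
        Real.Gamma s ^ (2 / (m : ℝ))) := by
  have hm0 : m ≠ 0 := by omega
  have hm' : (0 : ℝ) < m := by positivity
  set L : ℕ → ℝ := fun k ↦ log (Gamma ((s + k) / m))
  set c : ℕ → ℝ := fun k ↦ (2 * k + 1 - m) / m
  have hshift : ∀ k : ℕ, (s + 1 + k) / m = (s + (k + 1 : ℕ)) / m := fun k ↦ by push_cast; ring
  have hlogL : log ((∏ k ∈ range m, Gamma ((s + 1 + k) / m) ^ c k) /
      ∏ k ∈ range m, Gamma ((s + k) / m) ^ c k) = ∑ k ∈ range m, c k * (L (k + 1) - L k) := by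
    rw [log_div (by positivity) (by positivity), log_prod (fun k _ ↦ by positivity),
      log_prod (fun k _ ↦ by positivity), ← sum_sub_distrib]
    refine sum_congr rfl fun k _ ↦ ?_
    rw [log_rpow (by positivity), log_rpow (by positivity), hshift, mul_sub]
  have hsum : ∑ k ∈ range m, L (k + 1) =
      log ((2 * π) ^ (((m : ℝ) - 1) / 2) * (m : ℝ) ^ (1 / 2 - (s + 1)) * Gamma (s + 1)) := by
    rw [← prod_Gamma_add_div hm0 (by positivity), log_prod fun k _ ↦ by positivity]
    simp only [L, hshift]
  refine log_injOn_pos (Set.mem_Ioi.mpr (by positivity)) (Set.mem_Ioi.mpr (by positivity)) ?_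
  rw [hlogL, sum_range_mul_sub_of_arithmetic (c := c) (d := 2 / m)
    (fun k ↦ by simp only [c]; push_cast; ring), hsum]
  have hΓ : Gamma (s / m + 1) = s / m * Gamma (s / m) := Gamma_add_one (by positivity)
  simp only [L, c, CharP.cast_eq_zero, mul_zero, zero_add, add_zero, add_div s (m : ℝ),
    div_self hm'.ne', hΓ, Gamma_add_one hs.ne']
  simp (disch := positivity) only [log_mul, log_div, log_rpow]
  field_simp
  ring
end

section
/- Let $v \ge 0$ and let $m_1, \dots, m_v$ be integers with $m_j \ge 2$. With $Z_{\mathrm{ell}}(s) = \prod_{j=1}^{v}\prod_{k=0}^{m_j-1} \Gamma\!\left(\tfrac{s+k}{m_j}\right)^{\frac{2k+1-m_j}{m_j}}$ (real powers of positive reals, real Gamma function), one has the one-sided limit $\lim_{s \to 0^+}\ s^{-\sum_{j=1}^{v}\left(1 - \frac{1}{m_j}\right)}\, Z_{\mathrm{ell}}(s) = \prod_{j=1}^{v}\left[ m_j^{\frac{1-m_j}{m_j}} \prod_{k=1}^{m_j-1} \Gamma\!\left(\tfrac{k}{m_j}\right)^{\frac{2k+1-m_j}{m_j}} \right]$; in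 particular the limit is a positive real number, so $Z_{\mathrm{ell}}(s)$ vanishes to order $\sum_{j=1}^{v}(1-\tfrac{1}{m_j})$ as $s \to 0^+$. -/
/-!
For each `m`, only the `k = 0` factor `Γ(s/m)^((1-m)/m)` is singular at `s = 0`. By
`Γ(x) = Γ(x + 1) / x` it equals `(s/m)^(1 - 1/m) · Γ(s/m + 1)^((1-m)/m)`, so multiplying the
`m`-th product by `s^(-(1 - 1/m))` leaves a function continuous at `0`, with the positive value
`m^((1-m)/m) ∏_{k=1}^{m-1} Γ(k/m)^((2k+1-m)/m)` there. The power of `s` splits over `j`.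
-/

open Real Finset Filter Topology

namespace Real

theorem continuousAt_Gamma_of_pos {x : ℝ} (hx : 0 < x) : ContinuousAt Gamma x :=
  (differentiableOn_Gamma_Ioi.differentiableAt (Ioi_mem_nhds hx)).continuousAt

theorem Gamma_rpow_eq_rpow_neg_mul {x : ℝ} (hx : 0 < x) (a : ℝ) :
    Gamma x ^ a = x ^ (-a) * Gamma (x + 1) ^ a := by
  rw [Gamma_add_one hx.ne', mul_rpow hx.le (Gamma_pos_of_pos hx).le, ← mul_assoc,
    ← rpow_add hx, neg_add_cancel, rpow_zero, one_mul]

end Real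

theorem ContinuousAt.Gamma_rpow_const {f : ℝ → ℝ} {x : ℝ} (hf : ContinuousAt f x)
    (hfx : 0 < f x) (a : ℝ) : ContinuousAt (fun s => Gamma (f s) ^ a) x :=
  ((continuousAt_Gamma_of_pos hfx).comp hf).rpow_const (Or.inl (Gamma_pos_of_pos hfx).ne')

noncomputable def ellipticLeadingCoeff (M : ℕ) : ℝ :=
  (M : ℝ) ^ ((1 - (M : ℝ)) / M) *
    ∏ k ∈ Icc 1 (M - 1), Gamma ((k : ℝ) / M) ^ ((2 * (k : ℝ) + 1 - M) / M)

section

variable {M : ℕ}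

theorem ellipticLeadingCoeff_pos (hM : 0 < M) : 0 < ellipticLeadingCoeff M := by
  refine mul_pos (by positivity) (prod_pos fun k hk => rpow_pos_of_pos (Gamma_pos_of_pos ?_) _)
  have : 1 ≤ k := (mem_Icc.mp hk).1
  positivity

theorem rpow_neg_mul_prod_Gamma_rpow_eq (hM : 0 < M) {s : ℝ} (hs : 0 < s) :
    s ^ (-(1 - 1 / (M : ℝ))) *
        ∏ k ∈ range M, Gamma ((s + k) / M) ^ ((2 * (k : ℝ) + 1 - M) / M) =
      (M : ℝ) ^ ((1 - (M : ℝ)) / M) * Gamma (s / M + 1) ^ ((1 - (M : ℝ)) / M) *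
        ∏ k ∈ Icc 1 (M - 1), Gamma ((s + k) / M) ^ ((2 * (k : ℝ) + 1 - M) / M) := by
  have hM' : (0 : ℝ) < M := by exact_mod_cast hM
  have hIco : Ico 1 M = Icc 1 (M - 1) := by ext; simp; omega
  have hexp : -((1 - (M : ℝ)) / M) = 1 - 1 / M := by field_simp; ring
  have hpole : s ^ (-(1 - 1 / (M : ℝ))) * Gamma (s / M) ^ ((1 - (M : ℝ)) / M) =
      (M : ℝ) ^ ((1 - (M : ℝ)) / M) * Gamma (s / M + 1) ^ ((1 - (M : ℝ)) / M) := by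
    rw [Gamma_rpow_eq_rpow_neg_mul (by positivity), div_rpow hs.le hM'.le, hexp, ← mul_assoc,
      mul_div_assoc', ← rpow_add hs, neg_add_cancel, rpow_zero, one_div, ← rpow_neg hM'.le,
      ← hexp, neg_neg]
  rw [prod_range_eq_mul_Ico _ hM, hIco, ← mul_assoc]
  push_cast
  rw [mul_zero, zero_add, add_zero, hpole]

theorem tendsto_rpow_neg_mul_prod_Gamma_rpow (hM : 0 < M) :
    Tendsto (fun s : ℝ => s ^ (-(1 - 1 / (M : ℝ))) *
        ∏ k ∈ range M, Gamma ((s + k) / M) ^ ((2 * (k : ℝ) + 1 - M) / M))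
      (𝓝[>] 0) (𝓝 (ellipticLeadingCoeff M)) := by
  set g : ℝ → ℝ := fun s => (M : ℝ) ^ ((1 - (M : ℝ)) / M) *
    Gamma (s / M + 1) ^ ((1 - (M : ℝ)) / M) *
      ∏ k ∈ Icc 1 (M - 1), Gamma ((s + k) / M) ^ ((2 * (k : ℝ) + 1 - M) / M)
  have hg : ContinuousAt g 0 := by
    refine (continuousAt_const.mul ((by fun_prop : ContinuousAt (fun s : ℝ => s / M + 1) 0)
      |>.Gamma_rpow_const (by simp) _)).mul (tendsto_finsetProd _ fun k hk => ?_)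
    have : 1 ≤ k := (mem_Icc.mp hk).1
    exact (by fun_prop : ContinuousAt (fun s : ℝ => (s + k) / M) 0).Gamma_rpow_const
      (by simp only [zero_add]; positivity) _
  have hg0 : g 0 = ellipticLeadingCoeff M := by simp [g, ellipticLeadingCoeff]
  rw [← hg0]
  exact hg.continuousWithinAt.tendsto.congr' <| eventually_nhdsWithin_of_forall
    fun s hs => (rpow_neg_mul_prod_Gamma_rpow_eq hM hs).symm

end

/-- For integers `m₁, …, m_v ≥ 2`, with
`Z_ell(s) = ∏_j ∏_{k=0}^{m_j-1} Γ((s+k)/m_j)^{(2k+1-m_j)/m_j}` (real powers of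
positive reals, real Gamma function), one has
`lim_{s → 0⁺} s^{-∑_j (1 - 1/m_j)} Z_ell(s)
  = ∏_j [ m_j^{(1-m_j)/m_j} ∏_{k=1}^{m_j-1} Γ(k/m_j)^{(2k+1-m_j)/m_j} ]`,
and this limit is positive, so `Z_ell` vanishes to order `∑_j (1 - 1/m_j)`
as `s → 0⁺`. -/
theorem Zell_leading_behavior_at_zero (v : ℕ) (m : Fin v → ℕ)
    (hm : ∀ j, 2 ≤ m j) :
    Filter.Tendsto
      (fun s : ℝ =>
        s ^ (-(∑ j, (1 - 1 / (m j : ℝ)))) *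
          ∏ j, ∏ k ∈ Finset.range (m j),
            Real.Gamma ((s + k) / m j) ^ ((2 * (k : ℝ) + 1 - m j) / m j))
      (nhdsWithin 0 (Set.Ioi 0))
      (nhds (∏ j, ((m j : ℝ) ^ ((1 - (m j : ℝ)) / m j) *
        ∏ k ∈ Finset.Icc 1 (m j - 1),
          Real.Gamma ((k : ℝ) / m j) ^ ((2 * (k : ℝ) + 1 - m j) / m j)))) ∧
    0 < ∏ j, ((m j : ℝ) ^ ((1 - (m j : ℝ)) / m j) *
        ∏ k ∈ Finset.Icc 1 (m j - 1),
          Real.Gamma ((k : ℝ) / m j) ^ ((2 * (k : ℝ) + 1 - m j) / m j)) := by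
  have hm0 (j : Fin v) : 0 < m j := zero_lt_two.trans_le (hm j)
  refine ⟨?_, prod_pos fun j _ => ellipticLeadingCoeff_pos (hm0 j)⟩
  refine (tendsto_finsetProd univ fun j _ => tendsto_rpow_neg_mul_prod_Gamma_rpow (hm0 j)).congr'
    (eventually_nhdsWithin_of_forall fun s (hs : 0 < s) => ?_)
  rw [prod_mul_distrib, ← rpow_sum_of_pos hs, sum_neg_distrib]
end
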